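/- arXiv:2304.01063 — 3 statements merged into one kernel-verified Lean document; each statement's English description precedes it below -/
import Mathlib

section
/- For a spherically symmetric probability measure μ on ℝ^d, the function x ↦ E_{w∼μ}[‖w‖·ReLU(⟨w,x⟩)] equals C_Γ · (E_{w∼μ}‖w‖²/√d) · ‖x‖, where C_Γ = Γ(d/2)·√d / (2√π·Γ((d+1)/2)). -/
open MeasureTheory Real

noncomputable def Cgamma (d : ℕ) : ℝ :=
  Real.Gamma ((d : ℝ) / 2) * Real.sqrt d / (2 * Real.sqrt π * Real.Gamma (((d : ℝ) + 1) / 2))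

/-!
The map `x ↦ ∫ ‖w‖ relu ⟪w, x⟫ dμ` is positively homogeneous and, as `μ` is invariant under the
reflection exchanging two vectors of equal norm, depends only on `‖x‖`; so it is `K ‖x‖` with `K`
its value at a unit vector `e`. To find `K`, integrate `‖w‖ relu ⟪w, v⟫ exp (-‖v‖²)` against
`μ ⊗ volume` in both orders. The same invariance argument, applied to the Gaussian weight, makes
the `v`-integral `‖w‖² ∫ exp (-‖v‖²) relu (v₀) dv = ‖w‖² √π ^ (d - 1) / 2`, while the
`w`-integral is `K ‖v‖ exp (-‖v‖²)`, whose integral `K π^(d/2) Γ((d+1)/2) / Γ(d/2)` is computed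
in polar coordinates.
-/

open Set Module
open scoped RealInnerProductSpace

section RotationInvariant

variable {E : Type*} [NormedAddCommGroup E] [InnerProductSpace ℝ E] [MeasurableSpace E]

lemma integral_mul_relu_inner_smul (ν : Measure E) (ρ : ℝ → ℝ) {c : ℝ} (hc : 0 ≤ c) (x : E) :
    ∫ v, ρ ‖v‖ * max ⟪v, c • x⟫ 0 ∂ν = c * ∫ v, ρ ‖v‖ * max ⟪v, x⟫ 0 ∂ν := by
  rw [← integral_const_mul]
  congr 1 with v
  rw [real_inner_smul_right, show max (c * ⟪v, x⟫) 0 = c * max ⟪v, x⟫ 0 by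
    rw [mul_max_of_nonneg _ _ hc, mul_zero]]
  ring

variable [BorelSpace E] {ν : Measure E}

lemma integral_mul_relu_inner_eq_of_norm_eq (hν : ∀ R : E ≃ₗᵢ[ℝ] E, ν.map R = ν) (ρ : ℝ → ℝ)
    {x y : E} (h : ‖x‖ = ‖y‖) :
    ∫ v, ρ ‖v‖ * max ⟪v, x⟫ 0 ∂ν = ∫ v, ρ ‖v‖ * max ⟪v, y⟫ 0 ∂ν := by
  obtain ⟨R, rfl⟩ : ∃ R : E ≃ₗᵢ[ℝ] E, R x = y := ⟨_, Submodule.reflection_sub h⟩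
  have hR : MeasurePreserving R ν ν := ⟨R.continuous.measurable, hν R⟩
  conv_rhs => rw [← hR.integral_comp R.toHomeomorph.measurableEmbedding]
  simp only [LinearIsometryEquiv.norm_map, LinearIsometryEquiv.inner_map_map]

lemma integral_mul_relu_inner_eq_norm_mul (hν : ∀ R : E ≃ₗᵢ[ℝ] E, ν.map R = ν) (ρ : ℝ → ℝ)
    {e : E} (he : ‖e‖ = 1) (x : E) :
    ∫ v, ρ ‖v‖ * max ⟪v, x⟫ 0 ∂ν = ‖x‖ * ∫ v, ρ ‖v‖ * max ⟪v, e⟫ 0 ∂ν := by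
  rw [integral_mul_relu_inner_eq_of_norm_eq hν ρ (y := ‖x‖ • e) (by simp [norm_smul, he]),
    integral_mul_relu_inner_smul ν ρ (norm_nonneg x)]

end RotationInvariant

lemma integral_Ioi_pow_mul_exp_neg_sq (n : ℕ) :
    ∫ r in Ioi (0 : ℝ), r ^ n * exp (-r ^ 2) = Gamma ((n + 1) / 2) / 2 := by
  have h := integral_rpow_mul_exp_neg_rpow two_pos (q := n) (by linarith [n.cast_nonneg (α := ℝ)])
  simp only [rpow_natCast, rpow_two] at h
  rw [h]
  ring

lemma integral_exp_neg_sq_mul_relu : ∫ t : ℝ, exp (-t ^ 2) * max t 0 = 1 / 2 := by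
  rw [← setIntegral_eq_integral_of_forall_compl_eq_zero (s := Ioi 0)
    (fun t ht => by rw [max_eq_right (not_lt.mp ht), mul_zero]),
    setIntegral_congr_fun measurableSet_Ioi (g := fun t => t ^ 1 * exp (-t ^ 2))
    (fun t (ht : 0 < t) => by simp [max_eq_left ht.le, mul_comm]),
    integral_Ioi_pow_mul_exp_neg_sq]
  norm_num

lemma EuclideanSpace.integral_exp_neg_norm_sq_mul_relu_apply {ι : Type*} [Fintype ι] (i : ι) :
    ∫ v : EuclideanSpace ℝ ι, exp (-‖v‖ ^ 2) * max (v i) 0 = √π ^ (Fintype.card ι - 1) / 2 := by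
  classical
  rw [← (PiLp.volume_preserving_toLp ι).integral_comp
    (MeasurableEquiv.toLp 2 (ι → ℝ)).measurableEmbedding]
  have hfactor : ∀ y : ι → ℝ, exp (-‖WithLp.toLp 2 y‖ ^ 2) * max (y i) 0 =
      ∏ j, exp (-y j ^ 2) * (if j = i then max (y j) 0 else 1) := by
    intro y
    rw [Finset.prod_mul_distrib, ← exp_sum, Finset.prod_ite_eq', EuclideanSpace.norm_eq,
      sq_sqrt (by positivity)]
    simp [sq_abs]
  simp only [hfactor]
  rw [integral_fintype_prod_volume_eq_prod
    (fun j t => exp (-t ^ 2) * (if j = i then max t 0 else 1))]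
  have hgauss : ∫ t : ℝ, exp (-t ^ 2) = √π := by simpa using integral_gaussian 1
  have hrest : ∀ j ∈ ({i}ᶜ : Finset ι),
      ∫ t, exp (-t ^ 2) * (if j = i then max t 0 else 1) = √π := by
    intro j hj
    rw [Finset.mem_compl, Finset.mem_singleton] at hj
    simp [hj, hgauss]
  rw [Fintype.prod_eq_mul_prod_compl i, Finset.prod_congr rfl hrest]
  simp [integral_exp_neg_sq_mul_relu, Finset.card_compl]
  ring

section Gaussian

variable {E : Type*} [NormedAddCommGroup E] [InnerProductSpace ℝ E] [FiniteDimensional ℝ E]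
  [MeasurableSpace E] [BorelSpace E] [Nontrivial E]

lemma integrable_norm_mul_exp_neg_norm_sq : Integrable fun v : E => ‖v‖ * exp (-‖v‖ ^ 2) := by
  refine (integrable_fun_norm_addHaar volume (f := fun r => r * exp (-r ^ 2))).2 ?_
  refine (integrableOn_rpow_mul_exp_neg_mul_sq one_pos (s := finrank ℝ E)
    (neg_one_lt_zero.trans_le (Nat.cast_nonneg _))).congr_fun (fun r _ => ?_) measurableSet_Ioi
  show r ^ (finrank ℝ E : ℝ) * exp (-1 * r ^ 2) = r ^ (finrank ℝ E - 1) • (r * exp (-r ^ 2))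
  rw [rpow_natCast, smul_eq_mul, ← mul_assoc, ← pow_succ, Nat.sub_add_cancel finrank_pos,
    neg_one_mul]

lemma integral_norm_mul_exp_neg_norm_sq :
    ∫ v : E, ‖v‖ * exp (-‖v‖ ^ 2)
      = √π ^ finrank ℝ E * Gamma ((finrank ℝ E + 1) / 2) / Gamma (finrank ℝ E / 2) := by
  have hn : (0 : ℝ) < finrank ℝ E := Nat.cast_pos.mpr finrank_pos
  have hradial : ∫ r in Ioi (0 : ℝ), r ^ (finrank ℝ E - 1) • (r * exp (-r ^ 2))
      = Gamma ((finrank ℝ E + 1) / 2) / 2 := by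
    simp_rw [smul_eq_mul, ← mul_assoc, ← pow_succ, Nat.sub_add_cancel finrank_pos]
    exact integral_Ioi_pow_mul_exp_neg_sq _
  rw [integral_fun_norm_addHaar volume (fun r => r * exp (-r ^ 2)), hradial, measureReal_def,
    InnerProductSpace.volume_ball, nsmul_eq_mul, smul_eq_mul, ENNReal.toReal_mul,
    ENNReal.toReal_pow, ENNReal.toReal_ofReal zero_le_one, ENNReal.toReal_ofReal (by positivity),
    Gamma_add_one (by positivity)]
  field_simp
  ring

lemma integrable_norm_mul_relu_inner_mul_exp_neg_norm_sq_prod {μ : Measure E}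
    (hμ : Integrable (fun w => ‖w‖ ^ 2) μ) :
    Integrable (fun p : E × E => ‖p.1‖ * max ⟪p.1, p.2⟫ 0 * exp (-‖p.2‖ ^ 2)) (μ.prod volume) := by
  refine (hμ.mul_prod integrable_norm_mul_exp_neg_norm_sq).mono' (by fun_prop)
    (.of_forall fun p => ?_)
  have hrelu : max ⟪p.1, p.2⟫ 0 ≤ ‖p.1‖ * ‖p.2‖ := max_le (real_inner_le_norm _ _) (by positivity)
  rw [norm_of_nonneg (by positivity)]
  calc ‖p.1‖ * max ⟪p.1, p.2⟫ 0 * exp (-‖p.2‖ ^ 2)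
      ≤ ‖p.1‖ * (‖p.1‖ * ‖p.2‖) * exp (-‖p.2‖ ^ 2) := by gcongr
    _ = ‖p.1‖ ^ 2 * (‖p.2‖ * exp (-‖p.2‖ ^ 2)) := by ring

end Gaussian

theorem integral_norm_mul_relu_inner_mul_gaussian {E : Type*} [NormedAddCommGroup E]
    [InnerProductSpace ℝ E] [FiniteDimensional ℝ E] [MeasurableSpace E] [BorelSpace E]
    {μ : Measure E} [SFinite μ] (hrot : ∀ R : E ≃ₗᵢ[ℝ] E, μ.map R = μ)
    (hμ : Integrable (fun w => ‖w‖ ^ 2) μ) {e : E} (he : ‖e‖ = 1) :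
    (∫ w, ‖w‖ * max ⟪w, e⟫ 0 ∂μ) * ∫ v : E, ‖v‖ * exp (-‖v‖ ^ 2)
      = (∫ w, ‖w‖ ^ 2 ∂μ) * ∫ v : E, exp (-‖v‖ ^ 2) * max ⟪v, e⟫ 0 := by
  have : Nontrivial E := nontrivial_of_ne e 0 (by rintro rfl; simp at he)
  have hvol : ∀ R : E ≃ₗᵢ[ℝ] E, (volume : Measure E).map R = volume :=
    fun R => R.measurePreserving.map_eq
  have hint := integrable_norm_mul_relu_inner_mul_exp_neg_norm_sq_prod hμ
  have hv : ∀ w : E, ∫ v, ‖w‖ * max ⟪w, v⟫ 0 * exp (-‖v‖ ^ 2)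
      = ‖w‖ ^ 2 * ∫ v : E, exp (-‖v‖ ^ 2) * max ⟪v, e⟫ 0 := by
    intro w
    calc ∫ v, ‖w‖ * max ⟪w, v⟫ 0 * exp (-‖v‖ ^ 2)
        = ‖w‖ * ∫ v : E, exp (-‖v‖ ^ 2) * max ⟪v, w⟫ 0 := by
          rw [← integral_const_mul]
          congr 1 with v
          rw [real_inner_comm]
          ring
      _ = ‖w‖ ^ 2 * ∫ v : E, exp (-‖v‖ ^ 2) * max ⟪v, e⟫ 0 := by
          rw [integral_mul_relu_inner_eq_norm_mul hvol (fun r => exp (-r ^ 2)) he]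
          ring
  have hw : ∀ v : E, ∫ w, ‖w‖ * max ⟪w, v⟫ 0 * exp (-‖v‖ ^ 2) ∂μ
      = (∫ w, ‖w‖ * max ⟪w, e⟫ 0 ∂μ) * (‖v‖ * exp (-‖v‖ ^ 2)) := by
    intro v
    rw [integral_mul_const, integral_mul_relu_inner_eq_norm_mul hrot (fun r => r) he]
    ring
  calc (∫ w, ‖w‖ * max ⟪w, e⟫ 0 ∂μ) * ∫ v : E, ‖v‖ * exp (-‖v‖ ^ 2)
      = ∫ p : E × E, ‖p.1‖ * max ⟪p.1, p.2⟫ 0 * exp (-‖p.2‖ ^ 2) ∂(μ.prod volume) := by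
        rw [integral_prod_symm _ hint]
        simp_rw [hw, integral_const_mul]
    _ = (∫ w, ‖w‖ ^ 2 ∂μ) * ∫ v : E, exp (-‖v‖ ^ 2) * max ⟪v, e⟫ 0 := by
        rw [integral_prod _ hint]
        simp_rw [hv, integral_mul_const]

theorem stmt0 (d : ℕ) (hd : 1 ≤ d)
    (μ : Measure (EuclideanSpace ℝ (Fin d))) [IsProbabilityMeasure μ]
    (hrot : ∀ R : EuclideanSpace ℝ (Fin d) ≃ₗᵢ[ℝ] EuclideanSpace ℝ (Fin d),
      μ.map R = μ)
    (hmom : Integrable (fun w => ‖w‖ ^ 2) μ)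
    (x : EuclideanSpace ℝ (Fin d)) :
    ∫ w, ‖w‖ * max (inner ℝ w x : ℝ) 0 ∂μ
      = Cgamma d * ((∫ w, ‖w‖ ^ 2 ∂μ) / Real.sqrt d) * ‖x‖ := by
  set e : EuclideanSpace ℝ (Fin d) := EuclideanSpace.single ⟨0, hd⟩ 1
  have he : ‖e‖ = 1 := by simp [e]
  have : Nontrivial (EuclideanSpace ℝ (Fin d)) := nontrivial_of_ne e 0 (by simp [e])
  have hJ : ∫ v, exp (-‖v‖ ^ 2) * max ⟪v, e⟫ 0 = √π ^ (d - 1) / 2 := by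
    simpa [e, EuclideanSpace.inner_single_right] using
      EuclideanSpace.integral_exp_neg_norm_sq_mul_relu_apply (⟨0, hd⟩ : Fin d)
  have hpow : √π ^ d = √π ^ (d - 1) * √π := by rw [← pow_succ, Nat.sub_add_cancel hd]
  have hKN := integral_norm_mul_relu_inner_mul_gaussian hrot hmom he
  rw [integral_norm_mul_exp_neg_norm_sq, finrank_euclideanSpace_fin, hJ, hpow] at hKN
  have hd₀ : (0 : ℝ) < d := by exact_mod_cast hd
  have hΓ₀ : 0 < Gamma ((d : ℝ) / 2) := Gamma_pos_of_pos (by positivity)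
  have hΓ₁ : 0 < Gamma (((d : ℝ) + 1) / 2) := Gamma_pos_of_pos (by positivity)
  rw [integral_mul_relu_inner_eq_norm_mul hrot (fun r => r) he x, Cgamma]
  field_simp at hKN ⊢
  rw [hKN]
end

section
/- Let f(x) = E_{(w,b)∼μ₂}[ReLU(w·F(x)+b)] with F ≥ 0, and suppose all pairs of points in the support of μ₂ are within distance δ₂, r ≥ c > 0 for all (v,r) in the support, and −v ≥ c'·δ₂ with c' > 0 for all (v,r) in the support; let (w̄,b̄) be the mean of μ₂. If v·F(x)+r = 0 for some (v,r) in the support, then for all (v',r') in the support, v'·F(x)+r' ≤ O((1/|w̄|+1)·δ₂). -/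
set_option maxHeartbeats 800000 in
/-- If some second-layer neuron satisfies `v·F(x)+r = 0`, then every other neuron's
pre-activation is at most `O((1/|w̄| + 1)·δ₂)`, where `δ₂` is the spread of the layer,
biases are `Θ(1)` and weights satisfy `-v ≥ Ω(δ₂)`. -/
theorem stmt11 (clo chi cc : ℝ) (hclo : 0 < clo) (hchi : 0 < chi) (hcc : 0 < cc) :
    ∃ C : ℝ, 0 < C ∧
      ∀ (m : ℕ), 0 < m →
      ∀ (v r : Fin m → ℝ) (δ₂ Fx : ℝ),
        0 ≤ Fx → 0 < δ₂ →
        -- spread of the second layer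
        (∀ i j, |v i - v j| ≤ δ₂ ∧ |r i - r j| ≤ δ₂) →
        -- biases are Θ(1)
        (∀ i, clo ≤ r i ∧ r i ≤ chi) →
        -- weights satisfy -v ≥ Ω(δ₂)
        (∀ i, cc * δ₂ ≤ -(v i)) →
        ∀ i, v i * Fx + r i = 0 →
          ∀ j, v j * Fx + r j
            ≤ C * (1 / |(∑ k, v k) / m| + 1) * δ₂ := by
  refine ⟨chi * (2 + 2 / cc) + 1, by positivity, ?_⟩
  intro m hm v r δ₂ Fx hFx hδ hspread hbias hw i hi j
  have hm0 : (0 : ℝ) < m := by exact_mod_cast hm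
  have hcd : 0 < cc * δ₂ := mul_pos hcc hδ
  have hvi : cc * δ₂ ≤ -v i := hw i
  have hvi0 : 0 < -v i := lt_of_lt_of_le hcd hvi
  set S := ∑ k, v k with hS
  have hSle : S ≤ -((m : ℝ) * (cc * δ₂)) := by
    calc S ≤ ∑ _k : Fin m, -(cc * δ₂) :=
          Finset.sum_le_sum fun k _ => by linarith [hw k]
      _ = -((m : ℝ) * (cc * δ₂)) := by
          simp [Finset.sum_const, mul_comm]
  have hSneg : S / m < 0 := by
    apply div_neg_of_neg_of_pos _ hm0
    nlinarith
  have habs : |S / (m : ℝ)| = -(S / m) := abs_of_neg hSneg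
  set W := -(S / (m : ℝ)) with hW
  clear_value S W
  have hW0 : 0 < W := by simpa [hW] using neg_pos.mpr hSneg
  -- W ≤ -v i + δ₂
  have hsum2 : -S ≤ (m : ℝ) * (-v i + δ₂) := by
    have h1 : -S = ∑ k : Fin m, -(v k) := by simp [hS]
    rw [h1]
    calc ∑ k : Fin m, -(v k) ≤ ∑ _k : Fin m, (-v i + δ₂) :=
          Finset.sum_le_sum fun k _ => by
            have := (abs_le.1 (hspread i k).1).2
            linarith
      _ = (m : ℝ) * (-v i + δ₂) := by
          rw [Finset.sum_const, Finset.card_univ, Fintype.card_fin]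
          push_cast; ring
  have hWle : W ≤ -v i + δ₂ := by
    rw [hW, show -(S / (m:ℝ)) = (-S) / m by ring]
    exact (div_le_iff₀ hm0).2 (by nlinarith [hsum2])
  -- key inverse bound
  have hinv : 1 / (-v i) ≤ (2 + 2 / cc) * (1 / W) := by
    rcases le_or_gt δ₂ (W / 2) with h | h
    · have h1 : W / 2 ≤ -v i := by linarith
      have h2 : 1 / (-v i) ≤ 2 / W := by
        rw [div_le_div_iff₀ hvi0 hW0]; linarith
      have h3 : (0:ℝ) < 2 / cc := by positivity
      calc 1 / (-v i) ≤ 2 / W := h2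
        _ ≤ (2 + 2 / cc) * (1 / W) := by
            rw [div_eq_mul_one_div 2 W]
            have := one_div_pos.2 hW0
            nlinarith
    · have h1 : cc * (W / 2) < -v i := by nlinarith
      have h2 : 1 / (-v i) ≤ 1 / (cc * (W / 2)) := by
        apply one_div_le_one_div_of_le (by positivity) (le_of_lt h1)
      calc 1 / (-v i) ≤ 1 / (cc * (W / 2)) := h2
        _ = (2 / cc) * (1 / W) := by field_simp
        _ ≤ (2 + 2 / cc) * (1 / W) := by
            have := one_div_pos.2 hW0
            nlinarith
  -- Fx ≤ chi / (-v i)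
  have hFxle : Fx ≤ chi / (-v i) := by
    rw [le_div_iff₀ hvi0]
    have : Fx * (-v i) = r i := by linarith [hi]
    rw [this]; exact (hbias i).2
  -- pre-activation bound
  have h1 : v j - v i ≤ δ₂ := (abs_le.1 (hspread j i).1).2
  have h2 : r j - r i ≤ δ₂ := (abs_le.1 (hspread j i).2).2
  have hkey : v j * Fx + r j ≤ δ₂ * Fx + δ₂ := by
    have := mul_le_mul_of_nonneg_right h1 hFx
    nlinarith [hi]
  have hFx2 : Fx ≤ chi * ((2 + 2 / cc) * (1 / W)) := by
    have hchi' : chi / (-v i) = chi * (1 / (-v i)) := by ring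
    calc Fx ≤ chi / (-v i) := hFxle
      _ = chi * (1 / (-v i)) := hchi'
      _ ≤ chi * ((2 + 2 / cc) * (1 / W)) :=
          mul_le_mul_of_nonneg_left hinv (le_of_lt hchi)
  rw [habs]
  have hWpos : 0 < 1 / W := one_div_pos.2 hW0
  have hA : 0 < chi * (2 + 2 / cc) := by positivity
  have hfin : δ₂ * Fx ≤ δ₂ * (chi * ((2 + 2 / cc) * (1 / W))) :=
    mul_le_mul_of_nonneg_left hFx2 (le_of_lt hδ)
  nlinarith [hkey, hfin, mul_pos hA hδ, mul_pos hWpos hδ]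
end

section
/- Under the same hypotheses, f(x) = ReLU(w̄·F(x) + b̄) ± O((1/|w̄|+1)·δ₂) for every x, i.e., the network output is uniformly approximated by the single mean neuron up to error proportional to the spread of the second layer. -/
set_option maxHeartbeats 1600000 in
/-- The network output `f(x) = E_{(w,b)}ReLU(w F(x) + b)` is uniformly approximated by the single
mean neuron `ReLU(w̄ F(x) + b̄)` up to error `O((1/|w̄| + 1)·δ₂)`, where `δ₂` is the spread of the
second layer, biases are `Θ(1)` and weights satisfy `-v ≥ Ω(δ₂)`. -/
theorem stmt12 (clo chi cc : ℝ) (hclo : 0 < clo) (hchi : 0 < chi) (hcc : 0 < cc) :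
    ∃ C : ℝ, 0 < C ∧
      ∀ (m : ℕ), 0 < m →
      ∀ (v r : Fin m → ℝ) (δ₂ Fx : ℝ),
        0 ≤ Fx → 0 < δ₂ →
        -- spread of the second layer
        (∀ i j, |v i - v j| ≤ δ₂ ∧ |r i - r j| ≤ δ₂) →
        -- biases are Θ(1)
        (∀ i, clo ≤ r i ∧ r i ≤ chi) →
        -- weights satisfy -v ≥ Ω(δ₂)
        (∀ i, cc * δ₂ ≤ -(v i)) →
        |(∑ i, max (v i * Fx + r i) 0) / m
            - max ((∑ i, v i) / m * Fx + (∑ i, r i) / m) 0|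
          ≤ C * (1 / |(∑ i, v i) / m| + 1) * δ₂ := by
  obtain ⟨K, hK⟩ : ∃ x, chi * (1 + 1/cc) = x := ⟨_, rfl⟩
  have hKpos : 0 < K := by rw [← hK]; positivity
  refine ⟨K + 1, by positivity, ?_⟩
  intro m hm v r δ₂ Fx hFx hδ hspread hr hv
  have hm' : (0:ℝ) < m := by exact_mod_cast hm
  obtain ⟨vb, hvb⟩ : ∃ x, (∑ i, v i) / (m:ℝ) = x := ⟨_, rfl⟩
  obtain ⟨rb, hrb⟩ : ∃ x, (∑ i, r i) / (m:ℝ) = x := ⟨_, rfl⟩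
  rw [hvb, hrb]
  -- mean is dominated
  have hvb_le : vb ≤ -(cc*δ₂) := by
    rw [← hvb, div_le_iff₀ hm']
    calc ∑ i, v i ≤ ∑ _i : Fin m, -(cc*δ₂) :=
          Finset.sum_le_sum (fun i _ => by linarith [hv i])
      _ = -(cc*δ₂) * m := by simp [mul_comm]
  have hvbneg : vb < 0 := lt_of_le_of_lt hvb_le (by nlinarith)
  have habs : |vb| = -vb := abs_of_neg hvbneg
  have hrb_le : rb ≤ chi := by
    rw [← hrb, div_le_iff₀ hm']
    calc ∑ i, r i ≤ ∑ _i : Fin m, chi :=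
          Finset.sum_le_sum (fun i _ => (hr i).2)
      _ = chi * m := by simp [mul_comm]
  -- deviation of each coordinate from the mean
  have key : ∀ (u : Fin m → ℝ), (∀ i j, |u i - u j| ≤ δ₂) →
      ∀ i, |u i - (∑ j, u j)/m| ≤ δ₂ := by
    intro u hu i
    have heq : u i - (∑ j, u j)/m = (∑ j, (u i - u j))/m := by
      rw [Finset.sum_sub_distrib]
      field_simp
      rw [Finset.sum_const, Finset.card_univ, Fintype.card_fin, nsmul_eq_mul]
      ring
    rw [heq, abs_div, abs_of_pos hm', div_le_iff₀ hm']
    calc |∑ j, (u i - u j)| ≤ ∑ j, |u i - u j| := Finset.abs_sum_le_sum_abs _ _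
      _ ≤ ∑ _j : Fin m, δ₂ := Finset.sum_le_sum (fun j _ => hu i j)
      _ = δ₂ * m := by simp [mul_comm]
  have hvdev : ∀ i, |v i - vb| ≤ δ₂ := hvb ▸ key v (fun i j => (hspread i j).1)
  have hrdev : ∀ i, |r i - rb| ≤ δ₂ := hrb ▸ key r (fun i j => (hspread i j).2)
  -- per-term bound
  obtain ⟨B, hB⟩ : ∃ x, (K+1) * (1 / |vb| + 1) * δ₂ = x := ⟨_, rfl⟩
  have hBpos : 0 < B := by
    rw [← hB]
    have : 0 < 1 / |vb| + 1 := by positivity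
    positivity
  have hterm : ∀ i, |max (v i * Fx + r i) 0 - max (vb * Fx + rb) 0| ≤ B := by
    intro i
    by_cases hA : v i * Fx + r i ≤ 0
    · by_cases hBle : vb * Fx + rb ≤ 0
      · rw [max_eq_right hA, max_eq_right hBle]
        simpa using hBpos.le
      · -- mean neuron active: Fx * (-vb) < rb ≤ chi ≤ K
        push_neg at hBle
        have hFxb : Fx * (-vb) ≤ K := by
          have h1 : Fx * (-vb) < rb := by nlinarith
          have : chi ≤ K := by
            rw [← hK]
            nlinarith [one_div_pos.mpr hcc]
          linarith
        have hlip : |max (v i * Fx + r i) 0 - max (vb * Fx + rb) 0|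
            ≤ |(v i * Fx + r i) - (vb * Fx + rb)| := abs_max_sub_max_le_abs _ _ _
        have hdiff : |(v i * Fx + r i) - (vb * Fx + rb)| ≤ δ₂ * (Fx + 1) := by
          have h1 : |(v i * Fx + r i) - (vb * Fx + rb)| ≤ |(v i - vb) * Fx| + |r i - rb| := by
            have : (v i * Fx + r i) - (vb * Fx + rb) = (v i - vb) * Fx + (r i - rb) := by ring
            rw [this]; exact abs_add_le _ _
          have h2 : |(v i - vb) * Fx| ≤ δ₂ * Fx := by
            rw [abs_mul, abs_of_nonneg hFx]
            exact mul_le_mul_of_nonneg_right (hvdev i) hFx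
          nlinarith [hrdev i]
        have hFxK : Fx ≤ K / (-vb) := by
          rw [le_div_iff₀ (by linarith : (0:ℝ) < -vb)]
          linarith [hFxb]
        calc |max (v i * Fx + r i) 0 - max (vb * Fx + rb) 0|
            ≤ δ₂ * (Fx + 1) := le_trans hlip hdiff
          _ ≤ δ₂ * (K / (-vb) + 1) := by nlinarith
          _ ≤ B := by
              rw [← hB, habs]
              have h0 : 0 < -vb := by linarith
              have h1 : K / (-vb) + 1 ≤ (K+1) * (1 / (-vb) + 1) := by
                have e : (K+1) * (1 / (-vb) + 1) - (K / (-vb) + 1) = 1/(-vb) + K := by ring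
                have h2 : 0 < 1/(-vb) := by positivity
                linarith
              nlinarith
    · -- neuron i active: Fx * (-v i) ≤ r i ≤ chi, and -vb ≤ (1+1/cc)(-v i)
      push_neg at hA
      have hvi : cc * δ₂ ≤ -(v i) := hv i
      have hvineg : 0 < -(v i) := lt_of_lt_of_le (by positivity) hvi
      have hFxi : Fx * (-(v i)) < r i := by nlinarith
      have hvbvi : -vb ≤ (1 + 1/cc) * (-(v i)) := by
        have h1 : -vb ≤ -(v i) + δ₂ := by
          have := hvdev i
          rw [abs_le] at this
          linarith [this.1]
        have h2 : δ₂ ≤ (-(v i))/cc := by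
          rw [le_div_iff₀ hcc]; linarith
        have e3 : (1 + 1/cc) * (-(v i)) = -(v i) + (-(v i)) * (1/cc) := by ring
        have h2' : δ₂ ≤ (-(v i)) * (1/cc) := by rw [mul_one_div]; exact h2
        linarith
      have hFxb : Fx * (-vb) ≤ K := by
        have h1 : Fx * (-vb) ≤ Fx * ((1 + 1/cc) * (-(v i))) :=
          mul_le_mul_of_nonneg_left hvbvi hFx
        have h2 : Fx * (-(v i)) ≤ chi := le_trans hFxi.le (hr i).2
        have h3 : (0:ℝ) < 1 + 1/cc := by positivity
        calc Fx * (-vb) ≤ (1 + 1/cc) * (Fx * (-(v i))) := by linarith [h1]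
          _ ≤ (1 + 1/cc) * chi := by nlinarith
          _ = K := by rw [← hK]; ring
      have hlip : |max (v i * Fx + r i) 0 - max (vb * Fx + rb) 0|
          ≤ |(v i * Fx + r i) - (vb * Fx + rb)| := abs_max_sub_max_le_abs _ _ _
      have hdiff : |(v i * Fx + r i) - (vb * Fx + rb)| ≤ δ₂ * (Fx + 1) := by
        have h1 : |(v i * Fx + r i) - (vb * Fx + rb)| ≤ |(v i - vb) * Fx| + |r i - rb| := by
          have : (v i * Fx + r i) - (vb * Fx + rb) = (v i - vb) * Fx + (r i - rb) := by ring
          rw [this]; exact abs_add_le _ _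
        have h2 : |(v i - vb) * Fx| ≤ δ₂ * Fx := by
          rw [abs_mul, abs_of_nonneg hFx]
          exact mul_le_mul_of_nonneg_right (hvdev i) hFx
        nlinarith [hrdev i]
      have hFxK : Fx ≤ K / (-vb) := by
        rw [le_div_iff₀ (by linarith : (0:ℝ) < -vb)]
        linarith [hFxb]
      calc |max (v i * Fx + r i) 0 - max (vb * Fx + rb) 0|
          ≤ δ₂ * (Fx + 1) := le_trans hlip hdiff
        _ ≤ δ₂ * (K / (-vb) + 1) := by nlinarith
        _ ≤ B := by
            rw [← hB, habs]
            have h0 : 0 < -vb := by linarith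
            have h1 : K / (-vb) + 1 ≤ (K+1) * (1 / (-vb) + 1) := by
              have e : (K+1) * (1 / (-vb) + 1) - (K / (-vb) + 1) = 1/(-vb) + K := by ring
              have h2 : 0 < 1/(-vb) := by positivity
              linarith
            nlinarith
  -- assemble
  have hmain : (∑ i, max (v i * Fx + r i) 0) / m - max (vb * Fx + rb) 0
      = (∑ i, (max (v i * Fx + r i) 0 - max (vb * Fx + rb) 0)) / m := by
    rw [Finset.sum_sub_distrib]
    field_simp
    rw [Finset.sum_const, Finset.card_univ, Fintype.card_fin, nsmul_eq_mul]
    simp only [mul_comm]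
  rw [hmain, abs_div, abs_of_pos hm', div_le_iff₀ hm']
  calc |∑ i, (max (v i * Fx + r i) 0 - max (vb * Fx + rb) 0)|
      ≤ ∑ i, |max (v i * Fx + r i) 0 - max (vb * Fx + rb) 0| :=
        Finset.abs_sum_le_sum_abs _ _
    _ ≤ ∑ _i : Fin m, B := Finset.sum_le_sum (fun i _ => hterm i)
    _ = B * m := by simp [mul_comm]
    _ = (K + 1) * (1 / |vb| + 1) * δ₂ * m := by rw [hB]
end
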